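/- On an undirected graph, PPR satisfies the symmetry relation π(u,v)·d(u) = π(v,u)·d(v) for all nodes u, v, where d denotes node degree. -/
import Mathlib

lemma ppr_contraction_zero {V : Type*} [Fintype V] [DecidableEq V]
    (G : SimpleGraph V) [DecidableRel G.Adj]
    (hdeg : ∀ v, 1 ≤ G.degree v)
    (α : ℝ) (hα : 0 < α) (hα1 : α < 1)
    (f : V → V → ℝ)
    (hf : ∀ u v, f u v =
      (1 - α) * (1 / (G.degree u : ℝ)) * ∑ w ∈ G.neighborFinset u, f w v) :
    ∀ u v, f u v = 0 := by
  intro u v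
  have hne : (Finset.univ ×ˢ Finset.univ : Finset (V × V)).Nonempty := ⟨(u, v), by simp⟩
  obtain ⟨p, -, hp⟩ := Finset.exists_max_image _ (fun p : V × V => |f p.1 p.2|) hne
  set M := |f p.1 p.2| with hM
  have hMnn : 0 ≤ M := abs_nonneg _
  have hle : ∀ a b, |f a b| ≤ M := fun a b => hp (a, b) (by simp)
  have hdpos : (0:ℝ) < (G.degree p.1 : ℝ) := by
    exact_mod_cast Nat.lt_of_lt_of_le Nat.zero_lt_one (hdeg p.1)
  have hbound : M ≤ (1 - α) * M := by
    have h1 : |∑ w ∈ G.neighborFinset p.1, f w p.2| ≤ (G.degree p.1 : ℝ) * M := by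
      calc |∑ w ∈ G.neighborFinset p.1, f w p.2|
          ≤ ∑ w ∈ G.neighborFinset p.1, |f w p.2| := Finset.abs_sum_le_sum_abs _ _
        _ ≤ ∑ _w ∈ G.neighborFinset p.1, M := Finset.sum_le_sum fun w _ => hle w p.2
        _ = (G.degree p.1 : ℝ) * M := by
            rw [Finset.sum_const, nsmul_eq_mul, SimpleGraph.card_neighborFinset_eq_degree]
    calc M = |f p.1 p.2| := rfl
      _ = (1 - α) * (1 / (G.degree p.1 : ℝ)) * |∑ w ∈ G.neighborFinset p.1, f w p.2| := by
          rw [hf p.1 p.2, abs_mul, abs_of_nonneg (mul_nonneg (by linarith) (by positivity))]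
      _ ≤ (1 - α) * (1 / (G.degree p.1 : ℝ)) * ((G.degree p.1 : ℝ) * M) := by
          apply mul_le_mul_of_nonneg_left h1 (mul_nonneg (by linarith) (by positivity))
      _ = (1 - α) * M := by field_simp
  have hM0 : M = 0 := by nlinarith
  have := hle u v
  rw [hM0] at this
  exact abs_eq_zero.mp (le_antisymm this (abs_nonneg _))

lemma ppr_comm_rev {V : Type*} [Fintype V] [DecidableEq V]
    (G : SimpleGraph V) [DecidableRel G.Adj]
    (hdeg : ∀ v, 1 ≤ G.degree v)
    (α : ℝ) (hα : 0 < α) (hα1 : α < 1)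
    (ppr : V → V → ℝ)
    (hrec : ∀ u v, ppr u v =
      α * (if u = v then 1 else 0) +
        (1 - α) * (1 / (G.degree u : ℝ)) * ∑ w ∈ G.neighborFinset u, ppr w v) :
    ∀ u v, (1 / (G.degree u : ℝ)) * ∑ w ∈ G.neighborFinset u, ppr w v
      = ∑ w ∈ G.neighborFinset v, ppr u w / (G.degree w : ℝ) := by
  have hA : ∀ w x, (1 - α) * (1 / (G.degree w : ℝ)) * ∑ y ∈ G.neighborFinset w, ppr y x
      = ppr w x - α * (if w = x then 1 else 0) := fun w x => by linarith [hrec w x]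
  have key := ppr_contraction_zero G hdeg α hα hα1
    (fun u v => (1 / (G.degree u : ℝ)) * ∑ w ∈ G.neighborFinset u, ppr w v
      - ∑ w ∈ G.neighborFinset v, ppr u w / (G.degree w : ℝ)) ?_
  · intro u v
    have := key u v
    linarith
  · intro u v
    have hdu : ((G.degree u : ℝ)) ≠ 0 := by
      have : (0:ℝ) < (G.degree u : ℝ) := by exact_mod_cast Nat.lt_of_lt_of_le Nat.zero_lt_one (hdeg u)
      linarith
    have e1 : ∀ w, (1 - α) * ((1 / (G.degree w : ℝ)) * ∑ x ∈ G.neighborFinset w, ppr x v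
          - ∑ x ∈ G.neighborFinset v, ppr w x / (G.degree x : ℝ))
        = ppr w v - α * (if w = v then 1 else 0)
          - (1 - α) * ∑ x ∈ G.neighborFinset v, ppr w x / (G.degree x : ℝ) := fun w => by
      rw [mul_sub, ← mul_assoc, hA w v]
    have e2 : ∀ x, (1 - α) * (1 / (G.degree u : ℝ)) * ∑ w ∈ G.neighborFinset u, ppr w x / (G.degree x : ℝ)
        = ppr u x / (G.degree x : ℝ) - α * (if u = x then 1 else 0) / (G.degree x : ℝ) := fun x => by
      rw [← Finset.sum_div, ← mul_div_assoc, hA u x, sub_div]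
    have e3 : ∑ w ∈ G.neighborFinset u, α * (if w = v then (1:ℝ) else 0)
        = α * (if v ∈ G.neighborFinset u then 1 else 0) := by
      rw [← Finset.mul_sum, Finset.sum_ite_eq' (G.neighborFinset u) v (fun _ => (1:ℝ))]
    have e4 : ∑ x ∈ G.neighborFinset v, α * (if u = x then (1:ℝ) else 0) / (G.degree x : ℝ)
        = α * (if v ∈ G.neighborFinset u then 1 else 0) / (G.degree u : ℝ) := by
      have : ∀ x ∈ G.neighborFinset v, α * (if u = x then (1:ℝ) else 0) / (G.degree x : ℝ)
          = if u = x then α / (G.degree x : ℝ) else 0 := by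
        intro x _; split <;> simp
      rw [Finset.sum_congr rfl this, Finset.sum_ite_eq (G.neighborFinset v) u (fun x => α / (G.degree x : ℝ))]
      have hmem : u ∈ G.neighborFinset v ↔ v ∈ G.neighborFinset u := by
        simp [SimpleGraph.mem_neighborFinset, SimpleGraph.adj_comm]
      by_cases h : u ∈ G.neighborFinset v
      · rw [if_pos h, if_pos (hmem.mp h)]; ring
      · rw [if_neg h, if_neg (fun hh => h (hmem.mpr hh))]; simp
    have h5 : (1 - α) * ∑ w ∈ G.neighborFinset u,
          ((1 / (G.degree w : ℝ)) * ∑ x ∈ G.neighborFinset w, ppr x v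
            - ∑ x ∈ G.neighborFinset v, ppr w x / (G.degree x : ℝ))
        = (∑ w ∈ G.neighborFinset u, ppr w v) - α * (if v ∈ G.neighborFinset u then 1 else 0)
          - (1 - α) * ∑ w ∈ G.neighborFinset u, ∑ x ∈ G.neighborFinset v, ppr w x / (G.degree x : ℝ) := by
      rw [Finset.mul_sum, Finset.sum_congr rfl fun w _ => e1 w, Finset.sum_sub_distrib,
        Finset.sum_sub_distrib, e3, ← Finset.mul_sum]
    have h6 : (1 - α) * (1 / (G.degree u : ℝ)) * ∑ w ∈ G.neighborFinset u,
          ∑ x ∈ G.neighborFinset v, ppr w x / (G.degree x : ℝ)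
        = (∑ x ∈ G.neighborFinset v, ppr u x / (G.degree x : ℝ))
          - α * (if v ∈ G.neighborFinset u then 1 else 0) / (G.degree u : ℝ) := by
      rw [Finset.sum_comm, Finset.mul_sum, Finset.sum_congr rfl fun x _ => e2 x,
        Finset.sum_sub_distrib, e4]
    linear_combination (-(1 / (G.degree u : ℝ))) * h5 + h6

/-- Symmetry of PPR on undirected graphs: π(u,v)·d(u) = π(v,u)·d(v). -/
theorem ppr_symmetry {V : Type*} [Fintype V] [DecidableEq V]
    (G : SimpleGraph V) [DecidableRel G.Adj]
    (hconn : G.Connected) (hdeg : ∀ v, 1 ≤ G.degree v)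
    (α : ℝ) (hα : 0 < α) (hα1 : α < 1)
    (ppr : V → V → ℝ)
    (hrec : ∀ u v, ppr u v =
      α * (if u = v then 1 else 0) +
        (1 - α) * (1 / (G.degree u : ℝ)) * ∑ w ∈ G.neighborFinset u, ppr w v) :
    ∀ u v, ppr u v * (G.degree u : ℝ) = ppr v u * (G.degree v : ℝ) := by
  have hA : ∀ w x, (1 - α) * (1 / (G.degree w : ℝ)) * ∑ y ∈ G.neighborFinset w, ppr y x
      = ppr w x - α * (if w = x then 1 else 0) := fun w x => by linarith [hrec w x]
  have hd : ∀ v, ((G.degree v : ℝ)) ≠ 0 := fun v => by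
    have : (0:ℝ) < (G.degree v : ℝ) := by exact_mod_cast Nat.lt_of_lt_of_le Nat.zero_lt_one (hdeg v)
    linarith
  have hcomm := ppr_comm_rev G hdeg α hα hα1 ppr hrec
  have key := ppr_contraction_zero G hdeg α hα hα1
    (fun u v => ppr u v - ppr v u * (G.degree v : ℝ) / (G.degree u : ℝ)) ?_
  · intro u v
    have h0 := key u v
    have : ppr u v = ppr v u * (G.degree v : ℝ) / (G.degree u : ℝ) := by linarith
    rw [this]
    exact div_mul_cancel₀ _ (hd u)
  · intro u v
    have h4 : ∑ w ∈ G.neighborFinset u, ppr v w * (G.degree v : ℝ) / (G.degree w : ℝ)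
        = (G.degree v : ℝ) * ∑ w ∈ G.neighborFinset u, ppr v w / (G.degree w : ℝ) := by
      rw [Finset.mul_sum]; exact Finset.sum_congr rfl fun w _ => by ring
    have h3 := hcomm v u
    have h1 := hA u v
    have h2 := hA v u
    rw [Finset.sum_sub_distrib, h4, ← h3]
    by_cases h : u = v
    · subst h
      rw [mul_div_cancel_right₀ _ (hd u), sub_self]
      have hh : (G.degree u : ℝ) * (1 / (G.degree u : ℝ) * ∑ w ∈ G.neighborFinset u, ppr w u)
          = ∑ w ∈ G.neighborFinset u, ppr w u := by
        field_simp
        exact mul_div_cancel_left₀ _ (hd u)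
      rw [hh, sub_self, mul_zero]
    · rw [if_neg h] at h1
      rw [if_neg (Ne.symm h)] at h2
      rw [mul_zero, sub_zero] at h1 h2
      linear_combination (-1 : ℝ) * h1 + ((G.degree v : ℝ) / (G.degree u : ℝ)) * h2
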